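/- arXiv:2512.24444 — 2 statements merged into one kernel-verified Lean document; each statement's English description precedes it below -/
import Mathlib

section
/- For G = SL(n+1, ℝ), the minimal resonant codimension over all proper non-maximal parabolic subalgebras equals 2n − 1. -/
lemma key_sq {r : ℕ} (m : Fin r → ℕ) :
    (∑ i, m i) * (∑ i, m i) =
      (∑ i, m i * m i) + 2 * ∑ i : Fin r, ∑ j : Fin r, (if i < j then m i * m j else 0) := by
  rw [Finset.sum_mul_sum]
  have h : ∀ i j : Fin r, m i * m j =
      (if i < j then m i * m j else 0) + (if j < i then m i * m j else 0)
        + (if i = j then m i * m j else 0) := by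
    intro i j
    rcases lt_trichotomy i j with h | h | h
    · simp [h, not_lt_of_gt h, h.ne]
    · simp [h]
    · simp [h, not_lt_of_gt h, h.ne']
  calc ∑ i : Fin r, ∑ j : Fin r, m i * m j
      = ∑ i : Fin r, ∑ j : Fin r, ((if i < j then m i * m j else 0)
          + (if j < i then m i * m j else 0) + (if i = j then m i * m j else 0)) := by
        refine Finset.sum_congr rfl fun i _ => Finset.sum_congr rfl fun j _ => h i j
    _ = (∑ i : Fin r, ∑ j : Fin r, (if i < j then m i * m j else 0))
        + (∑ i : Fin r, ∑ j : Fin r, (if j < i then m i * m j else 0))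
        + (∑ i : Fin r, ∑ j : Fin r, (if i = j then m i * m j else 0)) := by
        simp [Finset.sum_add_distrib]
    _ = (∑ i : Fin r, ∑ j : Fin r, (if i < j then m i * m j else 0))
        + (∑ i : Fin r, ∑ j : Fin r, (if i < j then m i * m j else 0))
        + (∑ i, m i * m i) := by
        congr 1
        · congr 1
          rw [Finset.sum_comm]
          refine Finset.sum_congr rfl fun i _ => Finset.sum_congr rfl fun j _ => ?_
          by_cases h : i < j <;> simp [h, Nat.mul_comm]
        · refine Finset.sum_congr rfl fun i _ => ?_
          simp
    _ = _ := by ring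

lemma aux_abc (n a b c : ℕ) (hn : 2 ≤ n) (ha : 1 ≤ a) (hb : 1 ≤ b) (hc : 1 ≤ c)
    (h : a + b + c = n + 1) : 2 * n - 1 ≤ a * b + a * c + b * c := by
  obtain ⟨a', rfl⟩ : ∃ x, a = x + 1 := ⟨a - 1, by omega⟩
  obtain ⟨b', rfl⟩ : ∃ x, b = x + 1 := ⟨b - 1, by omega⟩
  obtain ⟨c', rfl⟩ : ∃ x, c = x + 1 := ⟨c - 1, by omega⟩
  have hexp : (a' + 1) * (b' + 1) + (a' + 1) * (c' + 1) + (b' + 1) * (c' + 1)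
      = (a' + b' + c') * 2 + 3 + (a' * b' + a' * c' + b' * c') := by ring
  rw [hexp]
  exact le_trans (by omega : 2 * n - 1 ≤ (a' + b' + c') * 2 + 3) (Nat.le_add_right _ _)

set_option maxHeartbeats 1000000 in
/-- For `G = SL(n+1, ℝ)`, the minimal resonant codimension over all
proper non-maximal parabolic subalgebras (compositions of `n+1` into `r ≥ 3` positive
blocks, with resonant codimension `Σ_{i<j} n_i n_j`) equals `2n - 1`. -/
theorem stmt8 (n : ℕ) (hn : 2 ≤ n) :
    (∀ r : ℕ, 3 ≤ r → ∀ m : Fin r → ℕ, (∀ i, 0 < m i) → (∑ i, m i) = n + 1 →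
      2 * n - 1 ≤ ∑ i : Fin r, ∑ j : Fin r, if i < j then m i * m j else 0) ∧
    (∃ r : ℕ, 3 ≤ r ∧ ∃ m : Fin r → ℕ, (∀ i, 0 < m i) ∧ (∑ i, m i) = n + 1 ∧
      (∑ i : Fin r, ∑ j : Fin r, if i < j then m i * m j else 0) = 2 * n - 1) := by
  constructor
  · intro r hr m hm hsum
    have key := key_sq m
    set S := ∑ i : Fin r, ∑ j : Fin r, if i < j then m i * m j else 0 with hS
    set i0 : Fin r := ⟨0, by omega⟩ with hi0
    set i1 : Fin r := ⟨1, by omega⟩ with hi1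
    set i2 : Fin r := ⟨2, by omega⟩ with hi2
    have h01 : i0 ≠ i1 := by simp [hi0, hi1, Fin.ext_iff]
    set s : Finset (Fin r) := {i0, i1} with hs
    set t : Finset (Fin r) := Finset.univ \ s with ht
    have hsub : s ⊆ Finset.univ := Finset.subset_univ s
    set a := m i0 with ha
    set b := m i1 with hb
    set c := ∑ j ∈ t, m j with hc
    have hsplit : a + b + c = n + 1 := by
      have := Finset.sum_sdiff (f := m) hsub
      rw [← hsum, ← this, Finset.sum_pair h01]
      ring
    have hsplit2 : (∑ i, m i * m i) = a * a + b * b + ∑ j ∈ t, m j * m j := by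
      have := Finset.sum_sdiff (f := fun i => m i * m i) hsub
      rw [← this, Finset.sum_pair h01]
      ring
    have hsq : ∑ j ∈ t, m j * m j ≤ c * c := by
      calc ∑ j ∈ t, m j * m j ≤ ∑ j ∈ t, m j * c := by
            refine Finset.sum_le_sum fun j hj => ?_
            exact Nat.mul_le_mul_left _
              (Finset.single_le_sum (f := m) (fun _ _ => Nat.zero_le _) hj)
        _ = c * c := by rw [← Finset.sum_mul]
    have hi2t : i2 ∈ t := by
      simp [ht, hs, hi0, hi1, hi2, Fin.ext_iff]
    have hcpos : 1 ≤ c :=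
      le_trans (hm i2) (Finset.single_le_sum (f := m) (fun _ _ => Nat.zero_le _) hi2t)
    have hmain : (n + 1) * (n + 1) ≤ a * a + b * b + c * c + 2 * S := by
      rw [← hsum]
      calc (∑ i, m i) * (∑ i, m i) = (∑ i, m i * m i) + 2 * S := key
        _ ≤ a * a + b * b + c * c + 2 * S := by rw [hsplit2]; omega
    have hring : (n + 1) * (n + 1) = a * a + b * b + c * c + 2 * (a * b + a * c + b * c) := by
      rw [← hsplit]; ring
    have h1 : a * b + a * c + b * c ≤ S := by linarith [hmain, hring]
    exact le_trans (aux_abc n a b c hn (hm i0) (hm i1) hcpos hsplit) h1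
  · refine ⟨3, le_refl 3, ![1, n - 1, 1], ?_, ?_, ?_⟩
    · intro i
      fin_cases i <;> simp <;> omega
    · simp [Fin.sum_univ_three]; omega
    · rw [Fin.sum_univ_three]
      simp [Fin.sum_univ_three]
      omega
end

section
/- Let A be a hyperbolic automorphism of ℝⁿ (no eigenvalues of modulus 1) with stable/unstable splitting ℝⁿ = Eˢ ⊕ Eᵘ. Then for every bounded function φ : ℝⁿ → ℝⁿ there exists a unique bounded function u : ℝⁿ → ℝⁿ solving the twisted cohomological equation u(x) − A⁻¹ u(A x) = φ(x) for all x. -/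
variable {E : Type*} [NormedAddCommGroup E] [NormedSpace ℝ E]

noncomputable def projCLM [FiniteDimensional ℝ E] (p q : Submodule ℝ E) (h : IsCompl p q) :
    E →L[ℝ] E :=
  LinearMap.toContinuousLinearMap (p.subtype ∘ₗ p.linearProjOfIsCompl q h)

lemma projCLM_mem [FiniteDimensional ℝ E] (p q : Submodule ℝ E) (h : IsCompl p q) (x : E) :
    projCLM p q h x ∈ p := by
  simpa [projCLM] using (p.linearProjOfIsCompl q h x).2

lemma projCLM_add [FiniteDimensional ℝ E] (p q : Submodule ℝ E) (h : IsCompl p q)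
    (a b : E) (ha : a ∈ p) (hb : b ∈ q) : projCLM p q h (a + b) = a := by
  have h1 : p.linearProjOfIsCompl q h a = ⟨a, ha⟩ :=
    Submodule.linearProjOfIsCompl_apply_left h ⟨a, ha⟩
  have h2 : p.linearProjOfIsCompl q h b = 0 :=
    Submodule.projectionOnto_apply_of_mem_right h hb
  simp [projCLM, map_add, h1, h2]

lemma projCLM_sum [FiniteDimensional ℝ E] (p q : Submodule ℝ E) (h : IsCompl p q) (x : E) :
    projCLM p q h x + projCLM q p h.symm x = x := by
  exact Submodule.projection_add_projection_eq_self h x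

lemma aux_pow (B : E →L[ℝ] E) (S : Submodule ℝ E) (θ : ℝ) (hθ0 : 0 ≤ θ)
    (hinv : ∀ v ∈ S, B v ∈ S) (hb : ∀ v ∈ S, ‖B v‖ ≤ θ * ‖v‖) :
    ∀ N : ℕ, ∀ v ∈ S, (B ^ N) v ∈ S ∧ ‖(B ^ N) v‖ ≤ θ ^ N * ‖v‖ := by
  intro N
  induction N with
  | zero => intro v hv; simpa using hv
  | succ N ih =>
    intro v hv
    have hBv := hinv v hv
    have h1 := ih (B v) hBv
    have heq : (B ^ (N + 1)) v = (B ^ N) (B v) := by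
      rw [pow_succ]; rfl
    refine ⟨heq ▸ h1.1, ?_⟩
    rw [heq]
    calc ‖(B ^ N) (B v)‖ ≤ θ ^ N * ‖B v‖ := h1.2
      _ ≤ θ ^ N * (θ * ‖v‖) := by
          exact mul_le_mul_of_nonneg_left (hb v hv) (pow_nonneg hθ0 N)
      _ = θ ^ (N + 1) * ‖v‖ := by ring

lemma aux_vanish (w : E) (θ K : ℝ) (hθ0 : 0 ≤ θ) (hθ : θ < 1)
    (h : ∀ N : ℕ, ‖w‖ ≤ θ ^ N * K) : w = 0 := by
  have h0 : Filter.Tendsto (fun N : ℕ => θ ^ N * K) Filter.atTop (nhds 0) := by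
    simpa using (tendsto_pow_atTop_nhds_zero_of_lt_one hθ0 hθ).mul_const K
  have := ge_of_tendsto' h0 h
  exact norm_le_zero_iff.mp this

set_option maxHeartbeats 1000000 in
/-- Let `A` be a hyperbolic automorphism of ℝⁿ with invariant splitting
`ℝⁿ = Eˢ ⊕ Eᵘ` and adapted-norm estimates `‖A|_{Eˢ}‖ ≤ θ < 1`, `‖A⁻¹|_{Eᵘ}‖ ≤ θ < 1`.
Then for every bounded `φ : ℝⁿ → ℝⁿ` there is a unique bounded `u` with
`u(x) - A⁻¹ u(A x) = φ(x)` for all `x`. -/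
theorem stmt12 (n : ℕ)
    (A : EuclideanSpace ℝ (Fin n) ≃L[ℝ] EuclideanSpace ℝ (Fin n))
    (Es Eu : Submodule ℝ (EuclideanSpace ℝ (Fin n)))
    (hcompl : IsCompl Es Eu)
    (hsinv : ∀ v ∈ Es, A v ∈ Es) (huinv : ∀ v ∈ Eu, A.symm v ∈ Eu)
    (θ : ℝ) (hθ0 : 0 ≤ θ) (hθ : θ < 1)
    (hs : ∀ v ∈ Es, ‖A v‖ ≤ θ * ‖v‖)
    (hu : ∀ v ∈ Eu, ‖A.symm v‖ ≤ θ * ‖v‖)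
    (φ : EuclideanSpace ℝ (Fin n) → EuclideanSpace ℝ (Fin n))
    (hφ : ∃ C : ℝ, ∀ x, ‖φ x‖ ≤ C) :
    ∃! u : EuclideanSpace ℝ (Fin n) → EuclideanSpace ℝ (Fin n),
      (∃ C : ℝ, ∀ x, ‖u x‖ ≤ C) ∧ ∀ x, u x - A.symm (u (A x)) = φ x := by
  classical
  obtain ⟨Cφ, hCφ⟩ := hφ
  have hCφ0 : 0 ≤ Cφ := le_trans (norm_nonneg _) (hCφ 0)
  set B : (EuclideanSpace ℝ (Fin n)) →L[ℝ] (EuclideanSpace ℝ (Fin n)) := (A : (EuclideanSpace ℝ (Fin n)) →L[ℝ] (EuclideanSpace ℝ (Fin n))) with hBdef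
  set C : (EuclideanSpace ℝ (Fin n)) →L[ℝ] (EuclideanSpace ℝ (Fin n)) := (A.symm : (EuclideanSpace ℝ (Fin n)) →L[ℝ] (EuclideanSpace ℝ (Fin n))) with hCdef
  have hB : ∀ x, B x = A x := fun x => rfl
  have hC : ∀ x, C x = A.symm x := fun x => rfl
  have hCB : ∀ x, C (B x) = x := fun x => A.symm_apply_apply x
  have hBC : ∀ x, B (C x) = x := fun x => A.apply_symm_apply x
  -- invariance both ways
  have hEsmap : Submodule.map (A.toLinearEquiv : (EuclideanSpace ℝ (Fin n)) →ₗ[ℝ] (EuclideanSpace ℝ (Fin n))) Es = Es := by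
    apply Submodule.eq_of_le_of_finrank_le
    · rintro _ ⟨v, hv, rfl⟩; exact hsinv v hv
    · rw [LinearEquiv.finrank_map_eq]
  have hsymmEs : ∀ v ∈ Es, A.symm v ∈ Es := by
    intro v hv
    rw [← hEsmap] at hv
    obtain ⟨w, hw, rfl⟩ := hv
    simpa using hw
  have hEumap : Submodule.map (A.symm.toLinearEquiv : (EuclideanSpace ℝ (Fin n)) →ₗ[ℝ] (EuclideanSpace ℝ (Fin n))) Eu = Eu := by
    apply Submodule.eq_of_le_of_finrank_le
    · rintro _ ⟨v, hv, rfl⟩; exact huinv v hv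
    · rw [LinearEquiv.finrank_map_eq]
  have hAEu : ∀ v ∈ Eu, A v ∈ Eu := by
    intro v hv
    rw [← hEumap] at hv
    obtain ⟨w, hw, rfl⟩ := hv
    have hw' : ((A.symm.toLinearEquiv : (EuclideanSpace ℝ (Fin n)) →ₗ[ℝ] (EuclideanSpace ℝ (Fin n))) w) = A.symm w := rfl
    rw [hw', A.apply_symm_apply]
    exact hw
  -- projections
  set Ps : (EuclideanSpace ℝ (Fin n)) →L[ℝ] (EuclideanSpace ℝ (Fin n)) := projCLM Es Eu hcompl with hPsdef
  set Pu : (EuclideanSpace ℝ (Fin n)) →L[ℝ] (EuclideanSpace ℝ (Fin n)) := projCLM Eu Es hcompl.symm with hPudef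
  have hPsmem : ∀ x, Ps x ∈ Es := fun x => projCLM_mem Es Eu hcompl x
  have hPumem : ∀ x, Pu x ∈ Eu := fun x => projCLM_mem Eu Es hcompl.symm x
  have hsum : ∀ x : (EuclideanSpace ℝ (Fin n)), Ps x + Pu x = x := fun x => projCLM_sum Es Eu hcompl x
  have hPsEq : ∀ a b : (EuclideanSpace ℝ (Fin n)), a ∈ Es → b ∈ Eu → Ps (a + b) = a := fun a b ha hb =>
    projCLM_add Es Eu hcompl a b ha hb
  have hPuEq : ∀ a b : (EuclideanSpace ℝ (Fin n)), a ∈ Es → b ∈ Eu → Pu (a + b) = b := by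
    intro a b ha hb
    have := projCLM_add Eu Es hcompl.symm b a hb ha
    rwa [add_comm] at this
  -- commutation
  have hPuC : ∀ x, Pu (C x) = C (Pu x) := by
    intro x
    conv_lhs => rw [← hsum x, map_add]
    exact hPuEq _ _ (hsymmEs _ (hPsmem x)) (huinv _ (hPumem x))
  have hPsB : ∀ x, Ps (B x) = B (Ps x) := by
    intro x
    conv_lhs => rw [← hsum x, map_add]
    exact hPsEq _ _ (hsinv _ (hPsmem x)) (hAEu _ (hPumem x))
  have hPuCN : ∀ N : ℕ, ∀ x, Pu ((C ^ N) x) = (C ^ N) (Pu x) := by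
    intro N
    induction N with
    | zero => intro x; simp
    | succ N ih =>
      intro x
      have heq : ∀ y : (EuclideanSpace ℝ (Fin n)), (C ^ (N + 1)) y = (C ^ N) (C y) := by
        intro y; rw [pow_succ]; rfl
      rw [heq, heq, ih (C x), hPuC]
  have hPsBN : ∀ N : ℕ, ∀ x, Ps ((B ^ N) x) = (B ^ N) (Ps x) := by
    intro N
    induction N with
    | zero => intro x; simp
    | succ N ih =>
      intro x
      have heq : ∀ y : (EuclideanSpace ℝ (Fin n)), (B ^ (N + 1)) y = (B ^ N) (B y) := by
        intro y; rw [pow_succ]; rfl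
      rw [heq, heq, ih (B x), hPsB]
  -- contraction of powers
  have hCpow := aux_pow C Eu θ hθ0 (fun v hv => huinv v hv) (fun v hv => hu v hv)
  have hBpow := aux_pow B Es θ hθ0 (fun v hv => hsinv v hv) (fun v hv => hs v hv)
  -- term functions
  set fu : (EuclideanSpace ℝ (Fin n)) → ℕ → (EuclideanSpace ℝ (Fin n)) := fun x m => (C ^ m) (Pu (φ ((B ^ m) x))) with hfudef
  set fs : (EuclideanSpace ℝ (Fin n)) → ℕ → (EuclideanSpace ℝ (Fin n)) := fun x m => (B ^ (m + 1)) (Ps (φ ((C ^ (m + 1)) x))) with hfsdef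
  set Ku : ℝ := ‖Pu‖ * Cφ with hKudef
  set Ks : ℝ := ‖Ps‖ * Cφ with hKsdef
  have hKu0 : 0 ≤ Ku := mul_nonneg (norm_nonneg _) hCφ0
  have hKs0 : 0 ≤ Ks := mul_nonneg (norm_nonneg _) hCφ0
  have hPuφ : ∀ y : (EuclideanSpace ℝ (Fin n)), ‖Pu (φ y)‖ ≤ Ku := by
    intro y
    calc ‖Pu (φ y)‖ ≤ ‖Pu‖ * ‖φ y‖ := Pu.le_opNorm _
      _ ≤ Ku := mul_le_mul_of_nonneg_left (hCφ y) (norm_nonneg _)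
  have hPsφ : ∀ y : (EuclideanSpace ℝ (Fin n)), ‖Ps (φ y)‖ ≤ Ks := by
    intro y
    calc ‖Ps (φ y)‖ ≤ ‖Ps‖ * ‖φ y‖ := Ps.le_opNorm _
      _ ≤ Ks := mul_le_mul_of_nonneg_left (hCφ y) (norm_nonneg _)
  have hfub : ∀ x m, ‖fu x m‖ ≤ θ ^ m * Ku := by
    intro x m
    calc ‖fu x m‖ ≤ θ ^ m * ‖Pu (φ ((B ^ m) x))‖ := (hCpow m _ (hPumem _)).2
      _ ≤ θ ^ m * Ku := mul_le_mul_of_nonneg_left (hPuφ _) (pow_nonneg hθ0 m)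
  have hfsb : ∀ x m, ‖fs x m‖ ≤ θ ^ m * Ks := by
    intro x m
    calc ‖fs x m‖ ≤ θ ^ (m + 1) * ‖Ps (φ ((C ^ (m + 1)) x))‖ := (hBpow (m+1) _ (hPsmem _)).2
      _ ≤ θ ^ (m + 1) * Ks := mul_le_mul_of_nonneg_left (hPsφ _) (pow_nonneg hθ0 _)
      _ ≤ θ ^ m * Ks :=
          mul_le_mul_of_nonneg_right (pow_le_pow_of_le_one hθ0 hθ.le (Nat.le_succ m)) hKs0
  have hgeomKu : Summable (fun m : ℕ => θ ^ m * Ku) :=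
    (summable_geometric_of_lt_one hθ0 hθ).mul_right Ku
  have hgeomKs : Summable (fun m : ℕ => θ ^ m * Ks) :=
    (summable_geometric_of_lt_one hθ0 hθ).mul_right Ks
  have hSu : ∀ x, Summable (fu x) := fun x =>
    Summable.of_norm_bounded hgeomKu (hfub x)
  have hSs : ∀ x, Summable (fs x) := fun x =>
    Summable.of_norm_bounded hgeomKs (hfsb x)
  have htsumKu : ∑' m : ℕ, θ ^ m * Ku = (1 - θ)⁻¹ * Ku := by
    rw [tsum_mul_right, tsum_geometric_of_lt_one hθ0 hθ]
  have htsumKs : ∑' m : ℕ, θ ^ m * Ks = (1 - θ)⁻¹ * Ks := by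
    rw [tsum_mul_right, tsum_geometric_of_lt_one hθ0 hθ]
  have hnu : ∀ x, Summable fun m => ‖fu x m‖ := fun x =>
    Summable.of_nonneg_of_le (fun m => norm_nonneg _) (hfub x) hgeomKu
  have hns : ∀ x, Summable fun m => ‖fs x m‖ := fun x =>
    Summable.of_nonneg_of_le (fun m => norm_nonneg _) (hfsb x) hgeomKs
  have hnormu : ∀ x, ‖∑' m, fu x m‖ ≤ (1 - θ)⁻¹ * Ku := by
    intro x
    calc ‖∑' m, fu x m‖ ≤ ∑' m, ‖fu x m‖ := norm_tsum_le_tsum_norm (hnu x)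
      _ ≤ ∑' m, θ ^ m * Ku := Summable.tsum_le_tsum (hfub x) (hnu x) hgeomKu
      _ = (1 - θ)⁻¹ * Ku := htsumKu
  have hnorms : ∀ x, ‖∑' m, fs x m‖ ≤ (1 - θ)⁻¹ * Ks := by
    intro x
    calc ‖∑' m, fs x m‖ ≤ ∑' m, ‖fs x m‖ := norm_tsum_le_tsum_norm (hns x)
      _ ≤ ∑' m, θ ^ m * Ks := Summable.tsum_le_tsum (hfsb x) (hns x) hgeomKs
      _ = (1 - θ)⁻¹ * Ks := htsumKs
  -- shift identities
  have hfu0 : ∀ x, fu x 0 = Pu (φ x) := by intro x; simp [hfudef]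
  have hfushift : ∀ x m, C (fu (B x) m) = fu x (m + 1) := by
    intro x m
    show C ((C ^ m) (Pu (φ ((B ^ m) (B x))))) = (C ^ (m + 1)) (Pu (φ ((B ^ (m + 1)) x)))
    have h1 : (B ^ m) (B x) = (B ^ (m + 1)) x := by rw [pow_succ]; rfl
    have h2 : ∀ y : EuclideanSpace ℝ (Fin n), C ((C ^ m) y) = (C ^ (m + 1)) y := by
      intro y; rw [pow_succ']; rfl
    rw [h1, h2]
  have hA1 : ∀ x, (∑' m, fu x m) - C (∑' m, fu (B x) m) = Pu (φ x) := by
    intro x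
    have e1 : C (∑' m, fu (B x) m) = ∑' m, fu x (m + 1) := by
      rw [ContinuousLinearMap.map_tsum C (hSu (B x))]
      exact tsum_congr (fun m => hfushift x m)
    rw [e1, Summable.tsum_eq_zero_add (hSu x), hfu0]
    exact add_sub_cancel_right _ _
  -- stable side
  have hgs : ∀ x m, C (fs (B x) m) = (B ^ m) (Ps (φ ((C ^ m) x))) := by
    intro x m
    show C ((B ^ (m + 1)) (Ps (φ ((C ^ (m + 1)) (B x))))) = (B ^ m) (Ps (φ ((C ^ m) x)))
    have h1 : (C ^ (m + 1)) (B x) = (C ^ m) x := by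
      have : (C ^ (m + 1)) (B x) = (C ^ m) (C (B x)) := by rw [pow_succ]; rfl
      rw [this, hCB]
    have h2 : ∀ y : EuclideanSpace ℝ (Fin n), C ((B ^ (m + 1)) y) = (B ^ m) y := by
      intro y
      have : (B ^ (m + 1)) y = B ((B ^ m) y) := by rw [pow_succ']; rfl
      rw [this, hCB]
    rw [h1, h2]
  have hgb : ∀ x (m : ℕ), ‖(B ^ m) (Ps (φ ((C ^ m) x)))‖ ≤ θ ^ m * Ks := by
    intro x m
    calc ‖(B ^ m) (Ps (φ ((C ^ m) x)))‖ ≤ θ ^ m * ‖Ps (φ ((C ^ m) x))‖ :=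
        (hBpow m _ (hPsmem _)).2
      _ ≤ θ ^ m * Ks := mul_le_mul_of_nonneg_left (hPsφ _) (pow_nonneg hθ0 m)
  have hSg : ∀ x, Summable (fun m : ℕ => (B ^ m) (Ps (φ ((C ^ m) x)))) := fun x =>
    Summable.of_norm_bounded hgeomKs (hgb x)
  have hB1 : ∀ x, (∑' m, fs x m) - C (∑' m, fs (B x) m) = -(Ps (φ x)) := by
    intro x
    have e1 : C (∑' m, fs (B x) m) = ∑' m, (B ^ m) (Ps (φ ((C ^ m) x))) := by
      rw [ContinuousLinearMap.map_tsum C (hSs (B x))]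
      exact tsum_congr (fun m => hgs x m)
    have e2 : ∑' m : ℕ, (B ^ m) (Ps (φ ((C ^ m) x))) = Ps (φ x) + ∑' m, fs x m := by
      rw [Summable.tsum_eq_zero_add (hSg x)]
      congr 1
    rw [e1, e2]
    abel
  -- the solution
  set U : EuclideanSpace ℝ (Fin n) → EuclideanSpace ℝ (Fin n) :=
    fun x => (∑' m, fu x m) - (∑' m, fs x m) with hUdef
  have hUb : ∀ x, ‖U x‖ ≤ (1 - θ)⁻¹ * Ku + (1 - θ)⁻¹ * Ks := fun x =>
    le_trans (norm_sub_le _ _) (add_le_add (hnormu x) (hnorms x))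
  have hUeq : ∀ x, U x - A.symm (U (A x)) = φ x := by
    intro x
    show (∑' m, fu x m) - (∑' m, fs x m)
        - C ((∑' m, fu (B x) m) - (∑' m, fs (B x) m)) = φ x
    rw [map_sub]
    calc (∑' m, fu x m) - (∑' m, fs x m)
          - (C (∑' m, fu (B x) m) - C (∑' m, fs (B x) m))
        = ((∑' m, fu x m) - C (∑' m, fu (B x) m))
          - ((∑' m, fs x m) - C (∑' m, fs (B x) m)) := by abel
      _ = Pu (φ x) - -(Ps (φ x)) := by rw [hA1 x, hB1 x]
      _ = φ x := by rw [sub_neg_eq_add, add_comm]; exact hsum (φ x)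
  refine ⟨U, ⟨⟨(1 - θ)⁻¹ * Ku + (1 - θ)⁻¹ * Ks, hUb⟩, hUeq⟩, ?_⟩
  rintro v ⟨⟨Cv, hCv⟩, hveq⟩
  funext x
  have hdeq : ∀ y, v y - U y = C (v (B y) - U (B y)) := by
    intro y
    have h3 : v y - A.symm (v (A y)) = U y - A.symm (U (A y)) := (hveq y).trans (hUeq y).symm
    rw [sub_eq_sub_iff_sub_eq_sub] at h3
    rw [map_sub]
    simp only [hC, hB]
    exact h3
  have hd' : ∀ y, B (v y - U y) = v (B y) - U (B y) := by
    intro y; rw [hdeq y, hBC]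
  have hd2 : ∀ y, v y - U y = B (v (C y) - U (C y)) := by
    intro y
    have h := hd' (C y)
    rw [hBC] at h
    exact h.symm
  have hfwd : ∀ (N : ℕ) y, v y - U y = (C ^ N) (v ((B ^ N) y) - U ((B ^ N) y)) := by
    intro N
    induction N with
    | zero => intro y; simp
    | succ N ih =>
      intro y
      rw [ih y, hdeq ((B ^ N) y)]
      have e1 : B ((B ^ N) y) = (B ^ (N + 1)) y := by rw [pow_succ']; rfl
      have e2 : ∀ z : EuclideanSpace ℝ (Fin n), (C ^ N) (C z) = (C ^ (N + 1)) z := by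
        intro z; rw [pow_succ]; rfl
      rw [e1, e2]
  have hbwd : ∀ (N : ℕ) y, v y - U y = (B ^ N) (v ((C ^ N) y) - U ((C ^ N) y)) := by
    intro N
    induction N with
    | zero => intro y; simp
    | succ N ih =>
      intro y
      rw [ih y, hd2 ((C ^ N) y)]
      have e1 : C ((C ^ N) y) = (C ^ (N + 1)) y := by rw [pow_succ']; rfl
      have e2 : ∀ z : EuclideanSpace ℝ (Fin n), (B ^ N) (B z) = (B ^ (N + 1)) z := by
        intro z; rw [pow_succ]; rfl
      rw [e1, e2]
  set CU : ℝ := (1 - θ)⁻¹ * Ku + (1 - θ)⁻¹ * Ks with hCUdef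
  have hCd : ∀ y, ‖v y - U y‖ ≤ Cv + CU := fun y =>
    le_trans (norm_sub_le _ _) (add_le_add (hCv y) (hUb y))
  have hPuB : ∀ y, ‖Pu (v y - U y)‖ ≤ ‖Pu‖ * (Cv + CU) := fun y =>
    le_trans (Pu.le_opNorm _) (mul_le_mul_of_nonneg_left (hCd y) (norm_nonneg _))
  have hPsB2 : ∀ y, ‖Ps (v y - U y)‖ ≤ ‖Ps‖ * (Cv + CU) := fun y =>
    le_trans (Ps.le_opNorm _) (mul_le_mul_of_nonneg_left (hCd y) (norm_nonneg _))
  have hPu0 : Pu (v x - U x) = 0 := by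
    apply aux_vanish _ θ (‖Pu‖ * (Cv + CU)) hθ0 hθ
    intro N
    rw [hfwd N x, hPuCN N]
    calc ‖(C ^ N) (Pu (v ((B ^ N) x) - U ((B ^ N) x)))‖
        ≤ θ ^ N * ‖Pu (v ((B ^ N) x) - U ((B ^ N) x))‖ := (hCpow N _ (hPumem _)).2
      _ ≤ θ ^ N * (‖Pu‖ * (Cv + CU)) :=
          mul_le_mul_of_nonneg_left (hPuB _) (pow_nonneg hθ0 N)
  have hPs0 : Ps (v x - U x) = 0 := by
    apply aux_vanish _ θ (‖Ps‖ * (Cv + CU)) hθ0 hθ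
    intro N
    rw [hbwd N x, hPsBN N]
    calc ‖(B ^ N) (Ps (v ((C ^ N) x) - U ((C ^ N) x)))‖
        ≤ θ ^ N * ‖Ps (v ((C ^ N) x) - U ((C ^ N) x))‖ := (hBpow N _ (hPsmem _)).2
      _ ≤ θ ^ N * (‖Ps‖ * (Cv + CU)) :=
          mul_le_mul_of_nonneg_left (hPsB2 _) (pow_nonneg hθ0 N)
  have hz : v x - U x = 0 := by
    rw [← hsum (v x - U x), hPs0, hPu0, add_zero]
  exact sub_eq_zero.mp hz
end
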